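/- Let n ≥ 1 and let μ_1, …, μ_n be real numbers with −1 < μ_k < 1 for every k. Then F(a) tends to −∞ as a → −1/2 from the right, where F(a) = ∫_{−1/(1+2a)}^{1} x·∏_{k=1}^{n}(1 + μ_{k,a}·x) dx with μ_{k,a} = μ_k + a(1+μ_k). -/

import Mathlib

open Real MeasureTheory Filter Set

theorem F_tendsto_atBot (n : ℕ) (hn : 1 ≤ n) (μ : Fin n → ℝ)
    (hμ : ∀ k, -1 < μ k ∧ μ k < 1) :
    Tendsto (fun a : ℝ =>
        ∫ x in (-1/(1+2*a))..1, x * ∏ k, (1 + (μ k + a * (1 + μ k)) * x))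
      (nhdsWithin (-1/2) (Set.Ioi (-1/2))) atBot := by
  have hgtends : Tendsto (fun a : ℝ => (1 - (1/(1+2*a))^2) / 2)
      (nhdsWithin (-1/2 : ℝ) (Set.Ioi (-1/2))) atBot := by
    have h1 : Tendsto (fun a : ℝ => 1 + 2*a) (nhdsWithin (-1/2 : ℝ) (Set.Ioi (-1/2)))
        (nhdsWithin 0 (Set.Ioi 0)) := by
      rw [tendsto_nhdsWithin_iff]
      constructor
      · exact ((continuous_const.add (continuous_const.mul continuous_id)).tendsto' _ _
          (by norm_num)).mono_left nhdsWithin_le_nhds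
      · filter_upwards [self_mem_nhdsWithin] with a ha
        simp only [Set.mem_Ioi] at ha ⊢
        linarith
    have h2 : Tendsto (fun a : ℝ => 1/(1+2*a)) (nhdsWithin (-1/2 : ℝ) (Set.Ioi (-1/2)))
        atTop := by
      simpa [one_div, Function.comp_def] using tendsto_inv_nhdsGT_zero.comp h1
    have h3 : Tendsto (fun a : ℝ => (1/(1+2*a))^2) (nhdsWithin (-1/2 : ℝ) (Set.Ioi (-1/2)))
        atTop := by
      simpa [sq] using h2.atTop_mul_atTop₀ h2
    have h4 : Tendsto (fun a : ℝ => 1 - (1/(1+2*a))^2)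
        (nhdsWithin (-1/2 : ℝ) (Set.Ioi (-1/2))) atBot := by
      simpa [sub_eq_add_neg] using
        tendsto_atBot_add_const_left _ 1 (tendsto_neg_atTop_atBot.comp h3)
    exact h4.atBot_div_const (by norm_num)
  refine tendsto_atBot_mono' _ ?_ hgtends
  -- eventually all coefficients are ≤ 0
  have hev : ∀ᶠ a in nhdsWithin (-1/2 : ℝ) (Set.Ioi (-1/2)),
      ∀ k, μ k + a * (1 + μ k) ≤ 0 := by
    rw [eventually_all]
    intro k
    have h1 : (0:ℝ) < 1 + μ k := by linarith [(hμ k).1]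
    have ht : (-1/2 : ℝ) < -(μ k)/(1 + μ k) := by
      rw [div_lt_div_iff₀ (by norm_num) h1]
      nlinarith [(hμ k).2]
    filter_upwards [Ioo_mem_nhdsGT_of_mem ⟨le_refl _, ht⟩] with a ha
    have : a * (1 + μ k) ≤ (-(μ k)/(1 + μ k)) * (1 + μ k) :=
      mul_le_mul_of_nonneg_right ha.2.le h1.le
    rw [div_mul_cancel₀ _ h1.ne'] at this
    linarith
  filter_upwards [hev, self_mem_nhdsWithin] with a hc ha
  simp only [Set.mem_Ioi] at ha
  have hL : (0:ℝ) < 1 + 2*a := by linarith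
  set L : ℝ := 1/(1+2*a) with hLdef
  have hLpos : 0 < L := by positivity
  have hc1 : ∀ k, -1 < μ k + a * (1 + μ k) := by
    intro k
    have h1 : (0:ℝ) < 1 + μ k := by linarith [(hμ k).1]
    have := mul_lt_mul_of_pos_right ha h1
    nlinarith [(hμ k).1]
  have hcont : Continuous (fun x : ℝ => x * ∏ k, (1 + (μ k + a * (1 + μ k)) * x)) :=
    continuous_id.mul (continuous_finset_prod _ (fun k _ => by fun_prop))
  have hint : ∀ u v : ℝ,
      IntervalIntegrable (fun x : ℝ => x * ∏ k, (1 + (μ k + a * (1 + μ k)) * x))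
      volume u v := fun u v => hcont.intervalIntegrable u v
  have hintid : ∀ u v : ℝ, IntervalIntegrable (fun x : ℝ => x) volume u v :=
    fun u v => continuous_id.intervalIntegrable u v
  have hneg : -1/(1+2*a) = -L := by rw [hLdef]; ring
  have hsplit : (∫ x in (-1/(1+2*a))..1, x * ∏ k, (1 + (μ k + a * (1 + μ k)) * x))
      = (∫ x in (-L)..0, x * ∏ k, (1 + (μ k + a * (1 + μ k)) * x))
      + ∫ x in (0:ℝ)..1, x * ∏ k, (1 + (μ k + a * (1 + μ k)) * x) := by
    rw [hneg, ← intervalIntegral.integral_add_adjacent_intervals (hint (-L) 0) (hint 0 1)]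
  have hI1 : (∫ x in (-L)..0, x * ∏ k, (1 + (μ k + a * (1 + μ k)) * x))
      ≤ ∫ x in (-L)..0, x := by
    apply intervalIntegral.integral_mono_on (by linarith) (hint _ _) (hintid _ _)
    intro x hx
    obtain ⟨hx1, hx2⟩ := hx
    have hprod : (1:ℝ) ≤ ∏ k, (1 + (μ k + a * (1 + μ k)) * x) := by
      calc (1:ℝ) = ∏ _k : Fin n, 1 := by simp
        _ ≤ ∏ k, (1 + (μ k + a * (1 + μ k)) * x) := by
          apply Finset.prod_le_prod (fun _ _ => by norm_num)
          intro k _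
          nlinarith [mul_nonneg (neg_nonneg.2 (hc k)) (neg_nonneg.2 hx2)]
    calc x * ∏ k, (1 + (μ k + a * (1 + μ k)) * x) ≤ x * 1 :=
          mul_le_mul_of_nonpos_left hprod hx2
      _ = x := mul_one x
  have hI2 : (∫ x in (0:ℝ)..1, x * ∏ k, (1 + (μ k + a * (1 + μ k)) * x))
      ≤ ∫ x in (0:ℝ)..1, x := by
    apply intervalIntegral.integral_mono_on (by norm_num) (hint _ _) (hintid _ _)
    intro x hx
    obtain ⟨hx1, hx2⟩ := hx
    have hprod : ∏ k, (1 + (μ k + a * (1 + μ k)) * x) ≤ 1 := by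
      apply Finset.prod_le_one
      · intro k _
        nlinarith [hc1 k, mul_le_mul_of_nonneg_right (hc1 k).le hx1]
      · intro k _
        nlinarith [mul_nonneg (neg_nonneg.2 (hc k)) hx1]
    calc x * ∏ k, (1 + (μ k + a * (1 + μ k)) * x) ≤ x * 1 :=
          mul_le_mul_of_nonneg_left hprod hx1
      _ = x := mul_one x
  have h1 : (∫ x in (-L)..0, x) = ((0:ℝ)^2 - (-L)^2)/2 := integral_id
  have h2 : (∫ x in (0:ℝ)..1, x) = ((1:ℝ)^2 - 0^2)/2 := integral_id
  have hfin := add_le_add hI1 hI2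
  rw [h1, h2] at hfin
  rw [hsplit]
  nlinarith [hfin]
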